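/- arXiv:1912.12812 — 6 statements merged into one kernel-verified Lean document; each statement's English description precedes it below -/
import Mathlib

section
/- Suppose τ is invertible. Let J be the sub-bimodule of A⊗A generated by elements 1⊗τ(a) − σ(a)⊗1, let δ_L(a) = 1⊗τ(a) − σ(a)⊗1, and for a (σ,τ)-derivation D : A → M let f_L : J → M be the restriction of the map x⊗y ↦ x·D(τ⁻¹(y)). Then D = f_L ∘ δ_L. -/
open TensorProduct MulOpposite

/-! Being the inverse of the algebra equivalence `τ`, the map `τinv` is `R`-linear, so
`x ⊗ y ↦ x • D (τinv y)` is well defined on `A ⊗[R] A`. On `1 ⊗ τ a - σ a ⊗ 1` it takes the value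
`D a - σ a • D 1`, and the twisted Leibniz rule at `a = b = 1` gives `D 1 = D 1 + D 1`. -/

theorem map_one_eq_zero_of_twisted_leibniz {A M F : Type*} [Monoid A] [AddGroup M]
    [MulAction A M] [MulAction Aᵐᵒᵖ M] [FunLike F A A] [MonoidHomClass F A A] (σ τ : F)
    (D : A → M) (hD : ∀ a b : A, D (a * b) = op (τ b) • D a + σ a • D b) :
    D 1 = 0 := by
  have h := hD 1 1
  rw [mul_one, map_one, map_one, op_one, one_smul, one_smul] at h
  exact left_eq_add.mp h

theorem universal_property_tau_invertible_general
    (R : Type*) [CommRing R] (A : Type*) [CommRing A] [Algebra R A]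
    (M : Type*) [AddCommGroup M] [Module R M]
    [Module A M] [Module Aᵐᵒᵖ M]
    [IsScalarTower R A M]
    (σ τ : A →ₐ[R] A) (τinv : A → A)
    (hinv₁ : Function.LeftInverse τinv ⇑τ)
    (hinv₂ : Function.RightInverse τinv ⇑τ)
    (D : A →ₗ[R] M)
    (hD : ∀ a b : A, D (a * b) = op (τ b) • D a + σ a • D b) :
    ∃ fL : A ⊗[R] A →ₗ[R] M,
      (∀ x y : A, fL (x ⊗ₜ[R] y) = x • D (τinv y)) ∧
      (∀ a : A, fL (1 ⊗ₜ[R] τ a - σ a ⊗ₜ[R] 1) = D a) := by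
  let τe : A ≃ₐ[R] A := AlgEquiv.ofBijective τ ⟨hinv₁.injective, hinv₂.surjective⟩
  have hτe : ∀ y, τe.symm y = τinv y := fun y => by
    rw [← hinv₁ (τe.symm y)]
    exact congrArg τinv (τe.apply_symm_apply y)
  refine ⟨lift ((Algebra.lsmul R R M).toLinearMap.compl₂ (D ∘ₗ τe.symm.toLinearMap)),
    fun x y => by simp [hτe], fun a => ?_⟩
  have hτinv_one : τinv 1 = 1 := by simpa using hinv₁ 1
  simp [hτe, hinv₁ a, hτinv_one, map_one_eq_zero_of_twisted_leibniz σ τ D hD]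

/-- Suppose `τ` is invertible, with inverse `τinv`.  For a `(σ,τ)`-derivation
`D : A → M` there is a (unique, being determined on generators) left `A`-linear
map `f_L` on `A ⊗[R] A`, `x ⊗ y ↦ x • D (τ⁻¹ y)`, whose restriction to the
sub-bimodule generated by the elements `δ_L a = 1 ⊗ τ a − σ a ⊗ 1` satisfies
`D = f_L ∘ δ_L`. -/
theorem universal_property_tau_invertible
    (R : Type*) [CommRing R] (A : Type*) [CommRing A] [Algebra R A]
    (M : Type*) [AddCommGroup M] [Module R M]
    [Module A M] [Module Aᵐᵒᵖ M] [SMulCommClass A Aᵐᵒᵖ M]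
    [IsScalarTower R A M] [IsScalarTower R Aᵐᵒᵖ M]
    (σ τ : A →ₐ[R] A) (τinv : A → A)
    (hinv₁ : Function.LeftInverse τinv ⇑τ)
    (hinv₂ : Function.RightInverse τinv ⇑τ)
    (D : A →ₗ[R] M)
    (hD : ∀ a b : A, D (a * b) = op (τ b) • D a + σ a • D b) :
    ∃ fL : A ⊗[R] A →ₗ[R] M,
      (∀ x y : A, fL (x ⊗ₜ[R] y) = x • D (τinv y)) ∧
      (∀ a : A, fL (1 ⊗ₜ[R] τ a - σ a ⊗ₜ[R] 1) = D a) :=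
  universal_property_tau_invertible_general R A M σ τ τinv hinv₁ hinv₂ D hD
end

section
/- Let d ≢ 1 mod 4 be square-free, σ = id and τ the conjugation a + b√d ↦ a − b√d on ℤ[√d]. Then every ℤ-linear map D : ℤ[√d] → ℤ[√d] with D(1) = 0 is a (σ,τ)-derivation, i.e., satisfies D(xy) = D(x)τ(y) + σ(x)D(y) for all x, y. -/
/-!
A `ℤ`-linear map `D` on `ℤ√d` with `D 1 = 0` is determined by `c = D √d`: it is `z ↦ z.im • c`.
The imaginary part is itself an `(id, star)`-derivation into `ℤ√d`, since
`im (x * y) = x.im * star y + x * y.im`, and multiplying this identity by `c` gives the claim.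
-/

open Zsqrtd

namespace Zsqrtd

variable {d : ℤ}

theorem intCast_im_mul (x y : ℤ√d) :
    (((x * y).im : ℤ) : ℤ√d) = x.im * star y + x * y.im := by
  ext <;> simp only [re_add, im_add, re_mul, im_mul, re_star, im_star, re_intCast,
    im_intCast] <;> ring

theorem linearMap_apply_eq_im_smul {D : ℤ√d →ₗ[ℤ] ℤ√d} (h1 : D 1 = 0) (z : ℤ√d) :
    D z = z.im • D sqrtd := by
  have hz : z = z.re • (1 : ℤ√d) + z.im • sqrtd := by
    ext <;> simp
  rw [hz, map_add, map_smul, map_smul, h1, smul_zero, zero_add]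
  simp

end Zsqrtd

theorem zsqrtd_linear_map_is_derivation_general
    (d : ℤ)
    (D : ℤ√d →ₗ[ℤ] ℤ√d) (h1 : D 1 = 0) :
    ∀ x y : ℤ√d, D (x * y) = D x * star y + x * D y := by
  intro x y
  rw [linearMap_apply_eq_im_smul h1 (x * y), linearMap_apply_eq_im_smul h1 x,
    linearMap_apply_eq_im_smul h1 y]
  simp only [zsmul_eq_mul, intCast_im_mul]
  ring

/-- For square-free `d ≢ 1 (mod 4)`, with `σ = id` and `τ` the conjugation
(`star`) on `ℤ√d`, every `ℤ`-linear map `D : ℤ√d → ℤ√d` with `D 1 = 0` is a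
`(σ,τ)`-derivation. -/
theorem zsqrtd_linear_map_is_derivation
    (d : ℤ) (hsf : Squarefree d) (hd : d % 4 ≠ 1)
    (D : ℤ√d →ₗ[ℤ] ℤ√d) (h1 : D 1 = 0) :
    ∀ x y : ℤ√d, D (x * y) = D x * star y + x * D y :=
  zsqrtd_linear_map_is_derivation_general d D h1
end

section
/- Let d ≢ 1 mod 4 be square-free, σ = id, τ the conjugation on ℤ[√d], and D a ℤ-linear map with D(1) = 0 and D(√d) = α + β√d. If 2d divides α and 2 divides β, then D is (σ,τ)-inner: there exists w ∈ ℤ[√d] with D(x) = w·τ(x) − σ(x)·w for all x. Specifically w = −(β/2 + (α/(2d))√d) works up to sign convention: D(x) = (β/2 + (α/(2d))√d)·(σ(x) − τ(x)). -/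
/-! A `ℤ`-linear map on `ℤ√d` is determined by its values at `1` and `√d`. The map
`x ↦ w (x - x̄)` vanishes at `1` and sends `√d` to `2w√d = 2d·w.im + 2·w.re·√d`, so the
divisibility conditions are exactly what makes `w = β/2 + (α/(2d))√d` match `D` at `√d`. -/

open Zsqrtd

namespace Zsqrtd

variable {d : ℤ}

theorem linearMap_ext {M : Type*} [AddCommGroup M] [Module ℤ M] {f g : ℤ√d →ₗ[ℤ] M}
    (h1 : f 1 = g 1) (hsqrtd : f sqrtd = g sqrtd) : f = g := by
  ext x
  have hx : x = x.re • (1 : ℤ√d) + x.im • sqrtd := by ext <;> simp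
  rw [hx]
  simp only [map_add, LinearMap.map_smul, h1, hsqrtd]

def mulSubStar (w : ℤ√d) : ℤ√d →ₗ[ℤ] ℤ√d where
  toFun x := w * (x - star x)
  map_add' x y := by rw [star_add]; ring
  map_smul' n x := by
    simp only [zsmul_eq_mul, eq_intCast, Int.cast_id, star_mul', star_intCast]
    ring

@[simp]
theorem mulSubStar_apply (w x : ℤ√d) : mulSubStar w x = w * (x - star x) := rfl

theorem mulSubStar_one (w : ℤ√d) : mulSubStar w 1 = 0 := by simp

theorem mulSubStar_sqrtd (w : ℤ√d) : mulSubStar w sqrtd = ⟨2 * d * w.im, 2 * w.re⟩ := by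
  ext <;> simp [star] <;> ring

theorem mulSubStar_eq_inner (w x : ℤ√d) : mulSubStar w x = -w * star x - x * -w := by
  rw [mulSubStar_apply]; ring

end Zsqrtd

theorem zsqrtd_derivation_inner_general
    (d : ℤ)
    (D : ℤ√d →ₗ[ℤ] ℤ√d) (h1 : D 1 = 0)
    (α β : ℤ) (hval : D sqrtd = ⟨α, β⟩)
    (hα : 2 * d ∣ α) (hβ : 2 ∣ β) :
    (∃ w : ℤ√d, ∀ x : ℤ√d, D x = w * star x - x * w) ∧
    (∀ x : ℤ√d, D x = (⟨β / 2, α / (2 * d)⟩ : ℤ√d) * (x - star x)) := by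
  set w : ℤ√d := ⟨β / 2, α / (2 * d)⟩
  have hD : D = mulSubStar w := by
    refine linearMap_ext (by rw [h1, mulSubStar_one]) ?_
    rw [hval, mulSubStar_sqrtd]
    ext
    · exact (Int.mul_ediv_cancel' hα).symm
    · exact (Int.mul_ediv_cancel' hβ).symm
  subst hD
  exact ⟨⟨-w, mulSubStar_eq_inner w⟩, mulSubStar_apply w⟩

/-- For square-free `d ≢ 1 (mod 4)`, `σ = id`, `τ = star` on `ℤ√d`: if a
`ℤ`-linear map `D` with `D 1 = 0` has `D √d = α + β√d` with `2d ∣ α` and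
`2 ∣ β`, then `D` is `(σ,τ)`-inner; specifically
`D x = (β/2 + (α/(2d))√d) * (σ x − τ x)`. -/
theorem zsqrtd_derivation_inner
    (d : ℤ) (hsf : Squarefree d) (hd : d % 4 ≠ 1)
    (D : ℤ√d →ₗ[ℤ] ℤ√d) (h1 : D 1 = 0)
    (α β : ℤ) (hval : D sqrtd = ⟨α, β⟩)
    (hα : 2 * d ∣ α) (hβ : 2 ∣ β) :
    (∃ w : ℤ√d, ∀ x : ℤ√d, D x = w * star x - x * w) ∧
    (∀ x : ℤ√d, D x = (⟨β / 2, α / (2 * d)⟩ : ℤ√d) * (x - star x)) :=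
  zsqrtd_derivation_inner_general d D h1 α β hval hα hβ
end

section
/- Let d ≡ 1 mod 4 be square-free, d ≠ 1, ω = (1+√d)/2, σ = id and τ the conjugation a + bω ↦ a + b(1−ω) on ℤ[ω]. Then every ℤ-linear map D : ℤ[ω] → ℤ[ω] with D(1) = 0 satisfies D(xy) = D(x)τ(y) + σ(x)D(y) for all x, y, i.e., is a (σ,τ)-derivation. -/
open Polynomial

/-! Both sides of the twisted Leibniz rule are `ℤ`-bilinear in `(x, y)`, so it suffices to check
it on the basis `{1, ω}`. On pairs involving `1` it follows from `D 1 = 0`, and on `(ω, ω)` it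
reads `D ω = D ω · (1 − ω) + ω · D ω`, because `ω² = ω + (d−1)/4` and `D` kills integers. -/

/-- `ℤ[ω]` with `ω = (1+√d)/2`, realized as `AdjoinRoot (X² − X − (d−1)/4)`;
for square-free `d ≡ 1 (mod 4)` this is the ring of integers of `ℚ(√d)`. -/
noncomputable abbrev Zomega (d : ℤ) : Type :=
  AdjoinRoot ((X : ℤ[X]) ^ 2 - X - C ((d - 1) / 4))

/-- The element `ω = (1+√d)/2` of `ℤ[ω]`. -/
noncomputable abbrev omegaElt (d : ℤ) : Zomega d := AdjoinRoot.root _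

theorem LinearMap.map_intCast_eq_zero {R M : Type*} [Ring R] [AddCommGroup M]
    (D : R →ₗ[ℤ] M) (h1 : D 1 = 0) (k : ℤ) : D k = 0 := by
  rw [← Int.smul_one_eq_cast, map_zsmul, h1, smul_zero]

theorem twisted_leibniz_of_basis {ι R : Type*} [Ring R] (b : Module.Basis ι ℤ R)
    (D : R →ₗ[ℤ] R) (τ : R →+* R)
    (h : ∀ i j, D (b i * b j) = D (b i) * τ (b j) + b i * D (b j)) (x y : R) :
    D (x * y) = D x * τ y + x * D y := by
  have hbilin : (LinearMap.mul ℤ R).compr₂ D =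
      (LinearMap.mul ℤ R).compl₁₂ D τ.toIntAlgHom.toLinearMap + (LinearMap.mul ℤ R).compl₂ D :=
    LinearMap.ext_basis b b fun i j => by simpa using h i j
  simpa using LinearMap.congr_fun₂ hbilin x y

section QuadraticOrder

variable (c : ℤ)

theorem natDegree_X_sq_sub_X_sub_C : ((X : ℤ[X]) ^ 2 - X - C c).natDegree = 2 := by
  compute_degree!

noncomputable def quadraticPowerBasis :
    Module.Basis (Fin 2) ℤ (AdjoinRoot ((X : ℤ[X]) ^ 2 - X - C c)) :=
  (AdjoinRoot.powerBasis' (by monicity!)).basis.reindex (finCongr (natDegree_X_sq_sub_X_sub_C c))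

theorem quadraticPowerBasis_apply (i : Fin 2) :
    quadraticPowerBasis c i = AdjoinRoot.root _ ^ (i : ℕ) := by
  simp only [quadraticPowerBasis, Module.Basis.coe_reindex, PowerBasis.coe_basis,
    AdjoinRoot.powerBasis'_gen, Function.comp_apply]
  rfl

theorem root_mul_self_X_sq_sub_X_sub_C :
    AdjoinRoot.root ((X : ℤ[X]) ^ 2 - X - C c) * AdjoinRoot.root _ =
      AdjoinRoot.root _ + (c : AdjoinRoot ((X : ℤ[X]) ^ 2 - X - C c)) := by
  have h := AdjoinRoot.eval₂_root ((X : ℤ[X]) ^ 2 - X - C c)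
  rw [eval₂_sub, eval₂_sub, eval₂_X_pow, eval₂_X, eval₂_C,
    eq_intCast (AdjoinRoot.of ((X : ℤ[X]) ^ 2 - X - C c))] at h
  linear_combination h

end QuadraticOrder

theorem quadratic_omega_linear_map_is_derivation_general
    (d : ℤ)
    (τ : Zomega d →+* Zomega d) (hτ : τ (omegaElt d) = 1 - omegaElt d)
    (D : Zomega d →ₗ[ℤ] Zomega d) (h1 : D 1 = 0) :
    ∀ x y : Zomega d, D (x * y) = D x * τ y + x * D y := by
  refine twisted_leibniz_of_basis (quadraticPowerBasis ((d - 1) / 4)) D τ fun i j => ?_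
  fin_cases i <;> fin_cases j <;>
    simp only [Fin.zero_eta, Fin.mk_one, Fin.isValue, quadraticPowerBasis_apply,
      Fin.coe_ofNat_eq_mod, Nat.zero_mod, Nat.mod_succ, pow_zero, pow_one, one_mul, mul_one,
      zero_mul, mul_zero, zero_add, add_zero, map_one, h1]
  rw [root_mul_self_X_sq_sub_X_sub_C, map_add, D.map_intCast_eq_zero h1, hτ]
  ring

/-- For square-free `d ≡ 1 (mod 4)`, `d ≠ 1`, with `σ = id` and `τ` the
conjugation `a + bω ↦ a + b(1−ω)` on `ℤ[ω]`: every `ℤ`-linear map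
`D : ℤ[ω] → ℤ[ω]` with `D 1 = 0` is a `(σ,τ)`-derivation. -/
theorem quadratic_omega_linear_map_is_derivation
    (d : ℤ) (hsf : Squarefree d) (hd : d % 4 = 1) (hd1 : d ≠ 1)
    (τ : Zomega d →+* Zomega d) (hτ : τ (omegaElt d) = 1 - omegaElt d)
    (D : Zomega d →ₗ[ℤ] Zomega d) (h1 : D 1 = 0) :
    ∀ x y : Zomega d, D (x * y) = D x * τ y + x * D y :=
  quadratic_omega_linear_map_is_derivation_general d τ hτ D h1
end

section
/- Let d ≢ 1 mod 4 be square-free. With σ = id and τ the conjugation on ℤ[√d], the ℤ-module of (σ,τ)-derivations of ℤ[√d] is free of rank 2, isomorphic to ℤ[√d] via D ↦ D(√d). -/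
/-!
A `(id, star)`-derivation `D` kills `1`, so writing `x = re x • 1 + im x • √d` gives
`D x = im x • D √d`. Conversely `x ↦ im x • w` is such a derivation for every `w`: in
`im x • w * (re y - im y √d) + (re x + im x √d) * im y • w` the `√d`-terms cancel, leaving
`im (x * y) • w`. Hence `D ↦ D √d` is a `ℤ`-linear isomorphism onto `ℤ√d ≅ ℤ²`.
-/

namespace Zsqrtd

variable {d : ℤ}

def equivProd : ℤ√d ≃ₗ[ℤ] ℤ × ℤ where
  toFun x := (x.re, x.im)
  invFun p := ⟨p.1, p.2⟩
  map_add' _ _ := rfl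
  map_smul' c x := by ext <;> simp [zsmul_eq_mul]
  left_inv _ := rfl
  right_inv _ := rfl

instance : Module.Free ℤ (ℤ√d) := Module.Free.of_equiv equivProd.symm

theorem finrank_eq_two : Module.finrank ℤ (ℤ√d) = 2 := by
  rw [equivProd.finrank_eq, Module.finrank_prod, Module.finrank_self]

def imLm : ℤ√d →ₗ[ℤ] ℤ where
  toFun := im
  map_add' := im_add
  map_smul' c x := by simp [zsmul_eq_mul]

@[simp] theorem imLm_apply (x : ℤ√d) : imLm x = x.im := rfl

theorem eq_re_smul_one_add_im_smul_sqrtd (x : ℤ√d) : x = x.re • (1 : ℤ√d) + x.im • sqrtd := by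
  ext <;> simp [zsmul_eq_mul]

variable (d) in
def starDerivations : Submodule ℤ (ℤ√d →ₗ[ℤ] ℤ√d) where
  carrier := {D | ∀ x y, D (x * y) = D x * star y + x * D y}
  add_mem' {D E} hD hE x y := by
    simp only [Set.mem_ofPred_eq, LinearMap.add_apply] at *
    rw [hD, hE]
    ring
  zero_mem' x y := by simp
  smul_mem' c D hD x y := by
    simp only [Set.mem_ofPred_eq, LinearMap.smul_apply] at *
    rw [hD, smul_add, smul_mul_assoc, mul_smul_comm]

theorem map_one_of_mem_starDerivations {D : ℤ√d →ₗ[ℤ] ℤ√d} (hD : D ∈ starDerivations d) :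
    D 1 = 0 := by
  simpa using hD 1 1

theorem apply_eq_im_smul_of_mem_starDerivations {D : ℤ√d →ₗ[ℤ] ℤ√d}
    (hD : D ∈ starDerivations d) (x : ℤ√d) : D x = x.im • D sqrtd := by
  conv_lhs => rw [eq_re_smul_one_add_im_smul_sqrtd x]
  rw [map_add, map_smul, map_smul, map_one_of_mem_starDerivations hD, smul_zero, zero_add]

theorem smulRight_imLm_mem_starDerivations (w : ℤ√d) :
    imLm.smulRight w ∈ starDerivations d := by
  intro x y
  simp only [LinearMap.smulRight_apply, imLm_apply, zsmul_eq_mul]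
  ext <;> simp [re_mul, im_mul] <;> ring

def starDerivationsEquiv : starDerivations d ≃ₗ[ℤ] ℤ√d where
  toFun D := D.1 sqrtd
  map_add' _ _ := rfl
  map_smul' _ _ := rfl
  invFun w := ⟨imLm.smulRight w, smulRight_imLm_mem_starDerivations w⟩
  left_inv D := Subtype.ext <| LinearMap.ext fun x =>
    (apply_eq_im_smul_of_mem_starDerivations D.2 x).symm
  right_inv w := by simp

end Zsqrtd

open Zsqrtd

theorem zsqrtd_derivations_free_rank_two_general
    (d : ℤ)
    (S : Submodule ℤ (ℤ√d →ₗ[ℤ] ℤ√d))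
    (hS : ∀ D : ℤ√d →ₗ[ℤ] ℤ√d,
      D ∈ S ↔ ∀ x y : ℤ√d, D (x * y) = D x * star y + x * D y) :
    (∃ e : S ≃ₗ[ℤ] ℤ√d, ∀ D : S, e D = (D : ℤ√d →ₗ[ℤ] ℤ√d) sqrtd) ∧
    Module.Free ℤ S ∧ Module.finrank ℤ S = 2 := by
  obtain rfl : S = starDerivations d := SetLike.ext hS
  refine ⟨⟨starDerivationsEquiv, fun _ => rfl⟩, .of_equiv starDerivationsEquiv.symm, ?_⟩
  rw [starDerivationsEquiv.finrank_eq, finrank_eq_two]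

/-- For square-free `d ≢ 1 (mod 4)`, with `σ = id` and `τ = star` on `ℤ√d`,
the `ℤ`-module of `(σ,τ)`-derivations of `ℤ√d` is free of rank 2, isomorphic
to `ℤ√d` via `D ↦ D √d`. -/
theorem zsqrtd_derivations_free_rank_two
    (d : ℤ) (hsf : Squarefree d) (hd : d % 4 ≠ 1)
    (S : Submodule ℤ (ℤ√d →ₗ[ℤ] ℤ√d))
    (hS : ∀ D : ℤ√d →ₗ[ℤ] ℤ√d,
      D ∈ S ↔ ∀ x y : ℤ√d, D (x * y) = D x * star y + x * D y) :
    (∃ e : S ≃ₗ[ℤ] ℤ√d, ∀ D : S, e D = (D : ℤ√d →ₗ[ℤ] ℤ√d) sqrtd) ∧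
    Module.Free ℤ S ∧ Module.finrank ℤ S = 2 :=
  zsqrtd_derivations_free_rank_two_general d S hS
end

section
/- Let d ≡ 1 mod 4 be square-free, d ≠ 1, ω = (1+√d)/2. With σ = id and τ the conjugation on ℤ[ω], every (σ,τ)-derivation D satisfies D(a + bω) = b·D(ω), so the ℤ-module of (σ,τ)-derivations of ℤ[ω] is isomorphic to ℤ[ω] via D ↦ D(ω). -/
/-!
Putting `x = y = 1` in the Leibniz rule gives `D 1 = 0`, so by linearity `D (a + bω) = b D ω` and
a derivation is determined by `D ω`. Conversely, for any `z` the linear map with `1 ↦ 0`,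
`ω ↦ z` is a derivation: both sides of the Leibniz rule are bilinear, so it suffices to check it
on the basis `1, ω`, and the only nontrivial case `x = y = ω` reads `D (ω²) = z (ω + τ ω)`, which
holds because `ω² = ω + (d - 1)/4` and `ω + τ ω = 1`.
-/

open Polynomial

section TwistedDerivation

variable {R A : Type*} [CommRing R] [CommRing A] [Algebra R A] {τ : A →ₐ[R] A}

variable (τ) in
/-- The `(σ, τ)`-derivations of `A` with `σ = id`. -/
def twistedDerivations : Submodule R (A →ₗ[R] A) where
  carrier := {D | ∀ x y, D (x * y) = D x * τ y + x * D y}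
  add_mem' {D₁ D₂} h₁ h₂ x y := by
    simp only [LinearMap.add_apply, h₁ x y, h₂ x y]
    ring
  zero_mem' _ _ := by simp
  smul_mem' r D h x y := by
    simp only [LinearMap.smul_apply, h x y, smul_add, smul_mul_assoc, mul_smul_comm]

theorem map_one_of_mem_twistedDerivations {D : A →ₗ[R] A} (hD : D ∈ twistedDerivations τ) :
    D 1 = 0 := by
  simpa using hD 1 1

theorem apply_smul_one_add_smul_of_mem_twistedDerivations {D : A →ₗ[R] A}
    (hD : D ∈ twistedDerivations τ) (a b : R) (ω : A) : D (a • 1 + b • ω) = b • D ω := by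
  rw [map_add, map_smul, map_smul, map_one_of_mem_twistedDerivations hD, smul_zero, zero_add]

theorem mem_twistedDerivations_of_basis {ι : Type*} (b : Module.Basis ι R A) {D : A →ₗ[R] A}
    (h : ∀ i j, D (b i * b j) = D (b i) * τ (b j) + b i * D (b j)) :
    D ∈ twistedDerivations τ := by
  have leibniz : (LinearMap.mul R A).compr₂ D =
      (LinearMap.mul R A).compl₁₂ D τ.toLinearMap + (LinearMap.mul R A).compl₂ D :=
    LinearMap.ext_basis b b fun i j => by simpa using h i j
  intro x y
  simpa using LinearMap.congr_fun₂ leibniz x y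

theorem constr_mem_twistedDerivations (b : Module.Basis (Fin 2) R A) {t n : R}
    (hb0 : b 0 = 1) (hmul : b 1 * b 1 = t • b 1 + n • 1) (hτ : τ (b 1) = t • 1 - b 1) (z : A) :
    b.constr R ![0, z] ∈ twistedDerivations τ := by
  have h0 : b.constr R ![0, z] 1 = 0 := by rw [← hb0, Module.Basis.constr_basis]; rfl
  have h1 : b.constr R ![0, z] (b 1) = z := by rw [Module.Basis.constr_basis]; rfl
  refine mem_twistedDerivations_of_basis b fun i j => ?_
  fin_cases i <;> fin_cases j <;> simp only [Fin.zero_eta, Fin.mk_one, hb0, one_mul, mul_one,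
    map_one, h0, h1, zero_mul, mul_zero, smul_zero, zero_add, add_zero, hmul, hτ, map_add,
    map_smul]
  rw [Algebra.smul_def, Algebra.smul_def]
  ring

noncomputable def twistedDerivationsEquivOfBasis (b : Module.Basis (Fin 2) R A) {t n : R}
    (hb0 : b 0 = 1) (hmul : b 1 * b 1 = t • b 1 + n • 1) (hτ : τ (b 1) = t • 1 - b 1) :
    twistedDerivations τ ≃ₗ[R] A where
  toFun D := (D : A →ₗ[R] A) (b 1)
  invFun z := ⟨b.constr R ![0, z], constr_mem_twistedDerivations b hb0 hmul hτ z⟩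
  map_add' _ _ := rfl
  map_smul' _ _ := rfl
  left_inv D := Subtype.ext <| b.ext fun i => by
    fin_cases i
    · rw [Module.Basis.constr_basis]
      simp [hb0, map_one_of_mem_twistedDerivations D.2]
    · simp
  right_inv z := by simp

end TwistedDerivation

section QuadraticAdjoinRoot

variable {R : Type*} [CommRing R]

theorem monic_X_pow_two_sub_X_sub_C (c : R) : ((X : R[X]) ^ 2 - X - C c).Monic := by
  monicity!

theorem natDegree_X_pow_two_sub_X_sub_C [Nontrivial R] (c : R) :
    ((X : R[X]) ^ 2 - X - C c).natDegree = 2 := by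
  compute_degree!

namespace AdjoinRoot

noncomputable def basisOfNatDegreeEqTwo {f : R[X]} (hf : f.Monic) (h2 : f.natDegree = 2) :
    Module.Basis (Fin 2) R (AdjoinRoot f) :=
  (powerBasis' hf).basis.reindex (finCongr h2)

theorem basisOfNatDegreeEqTwo_apply {f : R[X]} (hf : f.Monic) (h2 : f.natDegree = 2)
    (i : Fin 2) : basisOfNatDegreeEqTwo hf h2 i = root f ^ (i : ℕ) := by
  rw [basisOfNatDegreeEqTwo, Module.Basis.reindex_apply, PowerBasis.basis_eq_pow,
    powerBasis'_gen]
  rfl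

theorem root_mul_root_of_X_pow_two_sub_X_sub_C (c : R) :
    root ((X : R[X]) ^ 2 - X - C c) * root ((X : R[X]) ^ 2 - X - C c) =
      (1 : R) • root ((X : R[X]) ^ 2 - X - C c) + c • 1 := by
  have h := mk_self (f := (X : R[X]) ^ 2 - X - C c)
  simp only [map_sub, map_pow, mk_X, mk_C] at h
  rw [one_smul, Algebra.smul_def, mul_one, algebraMap_eq]
  linear_combination h

end AdjoinRoot

end QuadraticAdjoinRoot

theorem quadratic_omega_derivations_iso_general
    (d : ℤ)
    (τ : Zomega d →+* Zomega d) (hτ : τ (omegaElt d) = 1 - omegaElt d)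
    (S : Submodule ℤ (Zomega d →ₗ[ℤ] Zomega d))
    (hS : ∀ D : Zomega d →ₗ[ℤ] Zomega d,
      D ∈ S ↔ ∀ x y : Zomega d, D (x * y) = D x * τ y + x * D y) :
    (∀ D ∈ S, ∀ a b : ℤ,
      D (a • (1 : Zomega d) + b • omegaElt d) = b • D (omegaElt d)) ∧
    ∃ e : S ≃ₗ[ℤ] Zomega d,
      ∀ D : S, e D = (D : Zomega d →ₗ[ℤ] Zomega d) (omegaElt d) := by
  obtain rfl : S = twistedDerivations τ.toIntAlgHom := SetLike.ext hS
  set b := AdjoinRoot.basisOfNatDegreeEqTwo (monic_X_pow_two_sub_X_sub_C ((d - 1) / 4))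
    (natDegree_X_pow_two_sub_X_sub_C _)
  have hb0 : b 0 = 1 := by simp [b, AdjoinRoot.basisOfNatDegreeEqTwo_apply]
  have hb1 : b 1 = omegaElt d := by simp [b, AdjoinRoot.basisOfNatDegreeEqTwo_apply]
  have hmul : b 1 * b 1 = (1 : ℤ) • b 1 + ((d - 1) / 4) • 1 := by
    rw [hb1]
    exact AdjoinRoot.root_mul_root_of_X_pow_two_sub_X_sub_C _
  have hτb : τ.toIntAlgHom (b 1) = (1 : ℤ) • 1 - b 1 := by
    rw [hb1, one_smul]
    exact hτ
  refine ⟨fun D hD a _ => apply_smul_one_add_smul_of_mem_twistedDerivations hD a _ _,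
    twistedDerivationsEquivOfBasis b hb0 hmul hτb, fun D => ?_⟩
  show (D : Zomega d →ₗ[ℤ] Zomega d) (b 1) = _
  rw [hb1]

/-- For square-free `d ≡ 1 (mod 4)`, `d ≠ 1`, with `σ = id` and `τ` the
conjugation `ω ↦ 1 − ω` on `ℤ[ω]`: every `(σ,τ)`-derivation `D` satisfies
`D (a + bω) = b • D ω`, so the `ℤ`-module of `(σ,τ)`-derivations of `ℤ[ω]`
is isomorphic to `ℤ[ω]` via `D ↦ D ω`. -/
theorem quadratic_omega_derivations_iso
    (d : ℤ) (hsf : Squarefree d) (hd : d % 4 = 1) (hd1 : d ≠ 1)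
    (τ : Zomega d →+* Zomega d) (hτ : τ (omegaElt d) = 1 - omegaElt d)
    (S : Submodule ℤ (Zomega d →ₗ[ℤ] Zomega d))
    (hS : ∀ D : Zomega d →ₗ[ℤ] Zomega d,
      D ∈ S ↔ ∀ x y : Zomega d, D (x * y) = D x * τ y + x * D y) :
    (∀ D ∈ S, ∀ a b : ℤ,
      D (a • (1 : Zomega d) + b • omegaElt d) = b • D (omegaElt d)) ∧
    ∃ e : S ≃ₗ[ℤ] Zomega d,
      ∀ D : S, e D = (D : Zomega d →ₗ[ℤ] Zomega d) (omegaElt d) :=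
  quadratic_omega_derivations_iso_general d τ hτ S hS
end
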